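/- arXiv:2211.04044 — 6 statements merged into one kernel-verified Lean document; each statement's English description precedes it below -/
import Mathlib

section
/- Let W be a finite reflection group on V and let H be any subgroup of W. Then there exists a unique parabolic subgroup of W that minimally contains H; that is, there is a parabolic subgroup P with H ≤ P such that no parabolic subgroup Q of W satisfies H ≤ Q ⊊ P, and any parabolic subgroup minimally containing H equals P. -/
/-!
The parabolic subgroups minimally containing `H` are governed by the subspace `Fix H` of vectors
fixed by all of `H`: a parabolic subgroup `W_U` contains `H` exactly when `U ≤ Fix H`, and
`W_U` shrinks as `U` grows. Hence `W_{Fix H}` is the least parabolic subgroup containing `H`,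
and a least element is the unique minimal one.
-/

variable {V : Type*} [AddCommGroup V] [Module ℂ V] [FiniteDimensional ℂ V]

/-- A reflection on `V`: an invertible linear endomorphism of finite order, not the identity,
whose fixed-point subspace contains a hyperplane (codimension-one subspace) of `V`. -/
def IsReflection (g : (V →ₗ[ℂ] V)ˣ) : Prop :=
  g ≠ 1 ∧ IsOfFinOrder g ∧
    ∃ H : Submodule ℂ V, Module.finrank ℂ (V ⧸ H) = 1 ∧ ∀ v ∈ H, g.val v = v

/-- The pointwise stabilizer of a subspace `U ⊆ V` inside the group of invertible linear
endomorphisms of `V`. -/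
def pointStab (U : Submodule ℂ V) : Subgroup (V →ₗ[ℂ] V)ˣ where
  carrier := {g | ∀ u ∈ U, g.val u = u}
  one_mem' := fun u _ => rfl
  mul_mem' := by
    intro a b ha hb u hu
    have h : (a * b).val u = a.val (b.val u) := rfl
    rw [h, hb u hu, ha u hu]
  inv_mem' := by
    intro a ha u hu
    have h1 : a⁻¹.val (a.val u) = u := by
      have h2 : (a⁻¹ * a).val u = u := by rw [inv_mul_cancel a]; rfl
      exact h2
    calc a⁻¹.val u = a⁻¹.val (a.val u) := by rw [ha u hu]
      _ = u := h1

/-- `P` is a parabolic subgroup of `W`: the pointwise stabilizer in `W` of some subspace of `V`. -/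
def IsParabolic (W P : Subgroup (V →ₗ[ℂ] V)ˣ) : Prop :=
  ∃ U : Submodule ℂ V, P = W ⊓ pointStab U

section

variable {E : Type*} [AddCommGroup E] [Module ℂ E]

namespace Subgroup

def fixedSubmodule (H : Subgroup (E →ₗ[ℂ] E)ˣ) : Submodule ℂ E :=
  ⨅ g : H, LinearMap.fixedSubmodule ((g : (E →ₗ[ℂ] E)ˣ) : E →ₗ[ℂ] E)

theorem le_fixedSubmodule_iff {H : Subgroup (E →ₗ[ℂ] E)ˣ} {U : Submodule ℂ E} :
    U ≤ H.fixedSubmodule ↔ H ≤ pointStab U := by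
  constructor
  · intro h g hg u hu
    exact LinearMap.mem_fixedSubmodule_iff.1 ((Submodule.mem_iInf _).1 (h hu) ⟨g, hg⟩)
  · intro h u hu
    exact (Submodule.mem_iInf _).2 fun g => LinearMap.mem_fixedSubmodule_iff.2 (h g.2 u hu)

end Subgroup

theorem pointStab_antitone : Antitone (pointStab (V := E)) :=
  fun _ _ hUU' _ hg u hu => hg u (hUU' hu)

def parabolicClosure (W H : Subgroup (E →ₗ[ℂ] E)ˣ) : Subgroup (E →ₗ[ℂ] E)ˣ :=
  W ⊓ pointStab H.fixedSubmodule

section ParabolicClosure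

variable {W H : Subgroup (E →ₗ[ℂ] E)ˣ}

theorem isParabolic_parabolicClosure : IsParabolic W (parabolicClosure W H) :=
  ⟨_, rfl⟩

theorem le_parabolicClosure (hHW : H ≤ W) : H ≤ parabolicClosure W H :=
  le_inf hHW (Subgroup.le_fixedSubmodule_iff.1 le_rfl)

theorem IsParabolic.parabolicClosure_le {Q : Subgroup (E →ₗ[ℂ] E)ˣ} (hQ : IsParabolic W Q)
    (hHQ : H ≤ Q) : parabolicClosure W H ≤ Q := by
  obtain ⟨U, rfl⟩ := hQ
  have hU : U ≤ H.fixedSubmodule := Subgroup.le_fixedSubmodule_iff.2 (hHQ.trans inf_le_right)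
  exact inf_le_inf_left W (pointStab_antitone hU)

theorem isLeast_parabolicClosure (hHW : H ≤ W) :
    IsLeast {Q | IsParabolic W Q ∧ H ≤ Q} (parabolicClosure W H) :=
  ⟨⟨isParabolic_parabolicClosure, le_parabolicClosure hHW⟩,
    fun _ hQ => hQ.1.parabolicClosure_le hQ.2⟩

theorem minimal_isParabolic_and_le_iff {P : Subgroup (E →ₗ[ℂ] E)ˣ} :
    Minimal (fun Q => IsParabolic W Q ∧ H ≤ Q) P ↔
      IsParabolic W P ∧ H ≤ P ∧ ∀ Q, IsParabolic W Q → H ≤ Q → ¬ Q < P := by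
  rw [minimal_iff_forall_lt, and_assoc]
  exact and_congr_right fun _ => and_congr_right fun _ =>
    ⟨fun h Q hQ hHQ hlt => h hlt ⟨hQ, hHQ⟩, fun h Q hlt hQ => h Q hQ.1 hQ.2 hlt⟩

end ParabolicClosure

end

theorem stmt3_general (W H : Subgroup (V →ₗ[ℂ] V)ˣ)
    (hHW : H ≤ W) :
    ∃! P : Subgroup (V →ₗ[ℂ] V)ˣ, IsParabolic W P ∧ H ≤ P ∧
      ∀ Q : Subgroup (V →ₗ[ℂ] V)ˣ, IsParabolic W Q → H ≤ Q → ¬ Q < P := by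
  simp_rw [← minimal_isParabolic_and_le_iff]
  have hleast := isLeast_parabolicClosure hHW
  exact ⟨parabolicClosure W H, hleast.minimal, fun _ hP => hleast.minimal_iff.1 hP⟩

/-- Let `W` be a finite reflection group on `V` and `H ≤ W` any subgroup. Then
there is a unique parabolic subgroup of `W` minimally containing `H`. -/
theorem stmt3 (W H : Subgroup (V →ₗ[ℂ] V)ˣ) (hWfin : Finite W)
    (hW : W = Subgroup.closure {g : (V →ₗ[ℂ] V)ˣ | IsReflection g ∧ g ∈ W})
    (hHW : H ≤ W) :
    ∃! P : Subgroup (V →ₗ[ℂ] V)ˣ, IsParabolic W P ∧ H ≤ P ∧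
      ∀ Q : Subgroup (V →ₗ[ℂ] V)ˣ, IsParabolic W Q → H ≤ Q → ¬ Q < P :=
  stmt3_general W H hHW
end

section
/- Let W be a finite reflection group on V and ℓ a prime. If P is a parabolic subgroup of W minimally containing some Sylow ℓ-subgroup S of W, and P' is a parabolic subgroup of W minimally containing some Sylow ℓ-subgroup S' of W, then P and P' are conjugate in W: there exists w ∈ W with w P w⁻¹ = P'. -/
/-!
Since `W_U ∩ W_U' = W_(U ⊔ U')`, parabolic subgroups are closed under intersection, so a
parabolic subgroup minimally containing `K` is the least parabolic subgroup containing `K`, and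
in particular unique. Conjugation by `w ∈ W` permutes the parabolic subgroups, hence carries the
minimal parabolic overgroup of `K` to that of `w K w⁻¹`; by Sylow's theorem `S' = w S w⁻¹`.
-/

variable {V : Type*} [AddCommGroup V] [Module ℂ V] [FiniteDimensional ℂ V]

/-- `P` minimally contains the subgroup `K` among the parabolic subgroups of `W`. -/
def MinimallyContains (W P K : Subgroup (V →ₗ[ℂ] V)ˣ) : Prop :=
  IsParabolic W P ∧ K ≤ P ∧ ∀ Q : Subgroup (V →ₗ[ℂ] V)ˣ, IsParabolic W Q → K ≤ Q → ¬ Q < P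

open Pointwise

lemma Subgroup.map_subtype_conj_smul {G : Type*} [Group G] (W : Subgroup G) (g : W)
    (H : Subgroup W) :
    (MulAut.conj g • H).map W.subtype = MulAut.conj (g : G) • H.map W.subtype := by
  change (H.map (MulAut.conj g).toMonoidHom).map W.subtype
    = (H.map W.subtype).map (MulAut.conj (g : G)).toMonoidHom
  rw [Subgroup.map_map, Subgroup.map_map]
  congr 1

section Parabolic

omit [FiniteDimensional ℂ V]

variable {W P Q K : Subgroup (V →ₗ[ℂ] V)ˣ}

lemma pointStab_sup (U U' : Submodule ℂ V) :
    pointStab (U ⊔ U') = pointStab U ⊓ pointStab U' := by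
  ext g
  refine ⟨fun h => ⟨fun u hu => h u (Submodule.mem_sup_left hu),
    fun u hu => h u (Submodule.mem_sup_right hu)⟩, ?_⟩
  rintro ⟨h, h'⟩ v hv
  obtain ⟨u, hu, u', hu', rfl⟩ := Submodule.mem_sup.mp hv
  rw [map_add, h u hu, h' u' hu']

lemma conj_smul_pointStab (w : (V →ₗ[ℂ] V)ˣ) (U : Submodule ℂ V) :
    MulAut.conj w • pointStab U = pointStab (U.map (w : V →ₗ[ℂ] V)) := by
  ext g
  rw [Subgroup.mem_pointwise_smul_iff_inv_smul_mem, ← map_inv, MulAut.smul_def,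
    MulAut.conj_apply, inv_inv]
  change (∀ u ∈ U, w⁻¹ • g • w • u = u) ↔ ∀ v ∈ U.map (w : V →ₗ[ℂ] V), g • v = v
  simp only [inv_smul_eq_iff, Submodule.mem_map, forall_exists_index, and_imp,
    forall_apply_eq_imp_iff₂]
  rfl

lemma IsParabolic.inf (hP : IsParabolic W P) (hQ : IsParabolic W Q) :
    IsParabolic W (P ⊓ Q) := by
  obtain ⟨U, rfl⟩ := hP
  obtain ⟨U', rfl⟩ := hQ
  exact ⟨U ⊔ U', by rw [pointStab_sup, ← inf_inf_distrib_left]⟩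

lemma IsParabolic.conj_smul {w : (V →ₗ[ℂ] V)ˣ} (hw : w ∈ W) (hP : IsParabolic W P) :
    IsParabolic W (MulAut.conj w • P) := by
  obtain ⟨U, rfl⟩ := hP
  exact ⟨U.map (w : V →ₗ[ℂ] V), by
    rw [Subgroup.smul_inf, Subgroup.conj_smul_eq_self_of_mem hw, conj_smul_pointStab]⟩

lemma MinimallyContains.le (hP : MinimallyContains W P K) (hQ : IsParabolic W Q)
    (hKQ : K ≤ Q) : P ≤ Q := by
  obtain ⟨hPpar, hKP, hPmin⟩ := hP
  by_contra hPQ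
  exact hPmin _ (hPpar.inf hQ) (le_inf hKP hKQ) (inf_lt_left.mpr hPQ)

lemma MinimallyContains.eq (hP : MinimallyContains W P K) (hQ : MinimallyContains W Q K) :
    P = Q :=
  le_antisymm (hP.le hQ.1 hQ.2.1) (hQ.le hP.1 hP.2.1)

lemma MinimallyContains.conj_smul {w : (V →ₗ[ℂ] V)ˣ} (hw : w ∈ W)
    (h : MinimallyContains W P K) :
    MinimallyContains W (MulAut.conj w • P) (MulAut.conj w • K) := by
  obtain ⟨hpar, hKP, hmin⟩ := h
  refine ⟨hpar.conj_smul hw, Subgroup.pointwise_smul_le_pointwise_smul_iff.mpr hKP, ?_⟩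
  intro Q hQpar hKQ hQP
  have hQ'par : IsParabolic W ((MulAut.conj w)⁻¹ • Q) := by
    rw [← map_inv]
    exact hQpar.conj_smul (inv_mem hw)
  refine hmin _ hQ'par (Subgroup.pointwise_smul_subset_iff.mp hKQ)
    (lt_of_le_not_ge (Subgroup.subset_pointwise_smul_iff.mp hQP.le) fun hP => ?_)
  exact hQP.not_ge (Subgroup.pointwise_smul_subset_iff.mpr hP)

end Parabolic

theorem stmt4_general (ℓ : ℕ) (hℓ : ℓ.Prime) (W : Subgroup (V →ₗ[ℂ] V)ˣ) (hWfin : Finite W)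
    (S S' : Sylow ℓ W) (P P' : Subgroup (V →ₗ[ℂ] V)ˣ)
    (hP : MinimallyContains W P (Subgroup.map W.subtype (S : Subgroup W)))
    (hP' : MinimallyContains W P' (Subgroup.map W.subtype (S' : Subgroup W))) :
    ∃ w : (V →ₗ[ℂ] V)ˣ, w ∈ W ∧ Subgroup.map (MulAut.conj w).toMonoidHom P = P' := by
  have : Fact ℓ.Prime := ⟨hℓ⟩
  obtain ⟨g, rfl⟩ := MulAction.exists_smul_eq W S S'
  -- `MulAut.conj w • P` unfolds to `Subgroup.map (MulAut.conj w).toMonoidHom P`.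
  refine ⟨g, g.2, MinimallyContains.eq ?_ hP'⟩
  rw [Sylow.coe_subgroup_smul, Subgroup.map_subtype_conj_smul]
  exact hP.conj_smul g.2

/-- Let `W` be a finite reflection group on `V` and `ℓ` a prime. If the parabolic
subgroup `P` minimally contains a Sylow `ℓ`-subgroup `S` of `W` and the parabolic subgroup `P'`
minimally contains a Sylow `ℓ`-subgroup `S'` of `W`, then `P` and `P'` are conjugate by an
element of `W`. -/
theorem stmt4 (ℓ : ℕ) (hℓ : ℓ.Prime) (W : Subgroup (V →ₗ[ℂ] V)ˣ) (hWfin : Finite W)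
    (hW : W = Subgroup.closure {g : (V →ₗ[ℂ] V)ˣ | IsReflection g ∧ g ∈ W})
    (S S' : Sylow ℓ W) (P P' : Subgroup (V →ₗ[ℂ] V)ˣ)
    (hP : MinimallyContains W P (Subgroup.map W.subtype (S : Subgroup W)))
    (hP' : MinimallyContains W P' (Subgroup.map W.subtype (S' : Subgroup W))) :
    ∃ w : (V →ₗ[ℂ] V)ˣ, w ∈ W ∧ Subgroup.map (MulAut.conj w).toMonoidHom P = P' :=
  stmt4_general ℓ hℓ W hWfin S S' P P' hP hP'
end

section
/- Let G be a finite group, ℓ a prime, and ρ a group automorphism of G whose order is a power of ℓ (i.e., |ρ| = ℓ^i for some natural number i). Then there exists a Sylow ℓ-subgroup S of G that is stable under ρ, i.e., ρ(S) = S. -/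
/-! The cyclic group generated by `ρ` is an `ℓ`-group acting on the set of Sylow `ℓ`-subgroups,
whose cardinality is `1 mod ℓ` by Sylow's third theorem. An orbit of size `> 1` of an `ℓ`-group
has size divisible by `ℓ`, so not all orbits can be nontrivial: some Sylow subgroup is fixed. -/

open scoped Pointwise

theorem IsPGroup.exists_sylow_forall_smul_eq {p : ℕ} [Fact p.Prime] {G K : Type*} [Group G]
    [Finite (Sylow p G)] [Group K] [MulDistribMulAction K G] (hK : IsPGroup p K) :
    ∃ P : Sylow p G, ∀ k : K, k • P = P :=
  hK.nonempty_fixed_point_of_prime_not_dvd_card (Sylow p G) (not_dvd_card_sylow p G)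

theorem Sylow.coe_mulAut_smul {p : ℕ} {G : Type*} [Group G] (ρ : MulAut G) (P : Sylow p G) :
    ((ρ • P : Sylow p G) : Subgroup G) = (P : Subgroup G).map ρ.toMonoidHom :=
  Subgroup.pointwise_smul_def (P : Subgroup G)

/-- Let `G` be a finite group, `ℓ` a prime, and `ρ` an automorphism of `G` whose
order is a power of `ℓ`. Then some Sylow `ℓ`-subgroup of `G` is stable under `ρ`. -/
theorem stmt6 {G : Type*} [Group G] [Finite G] (ℓ : ℕ) (hℓ : ℓ.Prime)
    (ρ : MulAut G) (i : ℕ) (hρ : orderOf ρ = ℓ ^ i) :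
    ∃ S : Sylow ℓ G, Subgroup.map ρ.toMonoidHom (S : Subgroup G) = (S : Subgroup G) := by
  have : Fact ℓ.Prime := ⟨hℓ⟩
  have hρ_pGroup : IsPGroup ℓ (Subgroup.zpowers ρ) :=
    IsPGroup.of_card (by rw [Nat.card_zpowers, hρ])
  obtain ⟨S, hS⟩ := hρ_pGroup.exists_sylow_forall_smul_eq (G := G)
  refine ⟨S, ?_⟩
  rw [← Sylow.coe_mulAut_smul]
  exact congrArg _ (hS ⟨ρ, Subgroup.mem_zpowers ρ⟩)
end

section
/- Let ℓ be an odd prime and i ≥ 1 a natural number, and set n := ℓ^i. Let ρ be the 'reversal' permutation of Fin n given by ρ(k) = n − 1 − k (an involution). Then there exists a Sylow ℓ-subgroup S of the symmetric group Equiv.Perm (Fin n) that is stable under conjugation by ρ, i.e., ρ g ρ⁻¹ ∈ S for every g ∈ S. -/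
/-! Induction on `i`: identify `Fin (ℓ ^ (i + 1))` with `Fin (ℓ ^ i) × Fin ℓ` by mixed-radix
digits and take the wreath product of a `ρ`-stable Sylow subgroup `S` of `Perm (Fin (ℓ ^ i))`
with the rotation group `C_ℓ` of `Fin ℓ`. Under this identification `ρ` is reversal in both
digits, and reversal conjugates the rotation to its inverse, so `ρ` normalizes the wreath
product. Its order `|S| ℓ ^ (ℓ ^ i)` is the full `ℓ`-part of `(ℓ ^ (i + 1))!`, by Legendre's
`v_ℓ((ℓ m)!) = v_ℓ(m!) + m`. -/

open Equiv

namespace Equiv.Perm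

variable {α β : Type*}

/-- The wreath product `C ≀ K` in its imprimitive action on `α × β`, with blocks `{a} × β`. -/
def wreath (K : Subgroup (Perm α)) (C : Subgroup (Perm β)) : Subgroup (Perm (α × β)) where
  carrier := {σ | ∃ k ∈ K, ∃ f : α → Perm β, (∀ a, f a ∈ C) ∧ σ = prodShear k f}
  one_mem' := ⟨1, K.one_mem, fun _ => 1, fun _ => C.one_mem, by ext <;> simp⟩
  mul_mem' := by
    rintro _ _ ⟨k, hk, f, hf, rfl⟩ ⟨k', hk', f', hf', rfl⟩
    exact ⟨k * k', K.mul_mem hk hk', fun a => f (k' a) * f' a,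
      fun a => C.mul_mem (hf _) (hf' _), by ext <;> simp⟩
  inv_mem' := by
    rintro _ ⟨k, hk, f, hf, rfl⟩
    refine ⟨k⁻¹, K.inv_mem hk, fun a => (f (k⁻¹ a))⁻¹, fun a => C.inv_mem (hf _), ?_⟩
    exact inv_eq_of_mul_eq_one_right (by ext <;> simp)

theorem prodShear_inj [Nonempty β] {k k' : Perm α} {f f' : α → Perm β} :
    (prodShear k f : Perm (α × β)) = prodShear k' f' ↔ k = k' ∧ f = f' := by
  refine ⟨fun h => ?_, fun ⟨hk, hf⟩ => hk ▸ hf ▸ rfl⟩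
  obtain ⟨b⟩ := ‹Nonempty β›
  have happ (a : α) (b : β) : (k a, f a b) = (k' a, f' a b) := congrArg (· (a, b)) h
  exact ⟨ext fun a => congrArg Prod.fst (happ a b),
    funext fun a => ext fun b => congrArg Prod.snd (happ a b)⟩

theorem card_wreath [Finite α] [Nonempty β] (K : Subgroup (Perm α)) (C : Subgroup (Perm β)) :
    Nat.card (wreath K C) = Nat.card K * Nat.card C ^ Nat.card α := by
  rw [← Nat.card_fun, ← Nat.card_prod]
  refine (Nat.card_eq_of_bijective (fun kf : K × (α → C) =>
    (⟨prodShear kf.1 fun a => kf.2 a, kf.1, kf.1.2, _, fun a => (kf.2 a).2, rfl⟩ : wreath K C))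
    ⟨fun x y h => ?_, ?_⟩).symm
  · have h' := congrArg Subtype.val h
    dsimp only at h'
    obtain ⟨hk, hf⟩ := prodShear_inj.1 h'
    exact Prod.ext (Subtype.ext hk) (funext fun a => Subtype.ext (congrFun hf a))
  · rintro ⟨_, k, hk, f, hf, rfl⟩
    exact ⟨(⟨k, hk⟩, fun a => ⟨f a, hf a⟩), rfl⟩

theorem prodCongr_conj_mem_wreath {K : Subgroup (Perm α)} {C : Subgroup (Perm β)}
    {r : Perm α} {s : Perm β} (hK : ∀ g ∈ K, r * g * r⁻¹ ∈ K) (hC : ∀ g ∈ C, s * g * s⁻¹ ∈ C)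
    {g : Perm (α × β)} (hg : g ∈ wreath K C) :
    prodCongr r s * g * (prodCongr r s)⁻¹ ∈ wreath K C := by
  obtain ⟨k, hk, f, hf, rfl⟩ := hg
  refine ⟨r * k * r⁻¹, hK k hk, fun a => s * f (r⁻¹ a) * s⁻¹, fun a => hC _ (hf _), ?_⟩
  ext <;> simp

end Equiv.Perm

open Fin

theorem conj_mem_map_permCongrHom {α β : Type*} (e : α ≃ β) {S : Subgroup (Perm α)} {r : Perm α}
    (hS : ∀ g ∈ S, r * g * r⁻¹ ∈ S) :
    ∀ g ∈ S.map e.permCongrHom.toMonoidHom,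
      e.permCongr r * g * (e.permCongr r)⁻¹ ∈ S.map e.permCongrHom.toMonoidHom := by
  rintro _ ⟨g, hg, rfl⟩
  exact ⟨r * g * r⁻¹, hS g hg, by simp [← permCongrHom_coe]⟩

theorem conj_mem_zpowers_of_conj_eq_inv {G : Type*} [Group G] {r x : G}
    (h : r * x * r⁻¹ = x⁻¹) : ∀ g ∈ Subgroup.zpowers x, r * g * r⁻¹ ∈ Subgroup.zpowers x := by
  rintro _ ⟨k, rfl⟩
  rw [← conj_zpow, h]
  exact Subgroup.zpow_mem _ (Subgroup.inv_mem _ (Subgroup.mem_zpowers x)) k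

theorem Fin.revPerm_mul_finRotate_mul_revPerm_inv (n : ℕ) :
    revPerm * finRotate n * revPerm⁻¹ = (finRotate n)⁻¹ := by
  rcases n with _ | n
  · exact Subsingleton.elim _ _
  ext k
  simp [Perm.inv_def, rev_add, finRotate_symm_apply]

theorem finProdFinEquiv_rev {m n : ℕ} (a : Fin m) (b : Fin n) :
    finProdFinEquiv (a.rev, b.rev) = (finProdFinEquiv (a, b)).rev := by
  ext
  simp only [finProdFinEquiv_apply_val, val_rev]
  have ha : (a : ℕ) + 1 ≤ m := a.isLt
  have hb : (b : ℕ) + 1 ≤ n := b.isLt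
  have hab : (b : ℕ) + n * a + 1 ≤ m * n := by nlinarith
  zify [ha, hb, hab]
  ring

theorem permCongr_prodCongr_revPerm {m n N : ℕ} (h : m * n = N) :
    (finProdFinEquiv.trans (finCongr h)).permCongr (prodCongr revPerm revPerm) = revPerm := by
  subst h
  ext x
  obtain ⟨⟨a, b⟩, rfl⟩ := finProdFinEquiv.surjective x
  simp [permCongr_apply, finProdFinEquiv_rev]

theorem exists_sylow_revPerm_conj_mem (p : ℕ) [hp : Fact p.Prime] (n : ℕ) :
    ∃ S : Sylow p (Perm (Fin (p ^ n))), ∀ g ∈ S, revPerm * g * revPerm⁻¹ ∈ S := by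
  induction n with
  | zero =>
    have : Subsingleton (Perm (Fin (p ^ 0))) := by rw [pow_zero]; infer_instance
    exact ⟨default, fun g hg => by rwa [Subsingleton.elim (revPerm * g * revPerm⁻¹) g]⟩
  | succ n ih =>
    obtain ⟨S, hS⟩ := ih
    let C := Subgroup.zpowers (finRotate p)
    have hC : ∀ g ∈ C, revPerm * g * revPerm⁻¹ ∈ C :=
      conj_mem_zpowers_of_conj_eq_inv (revPerm_mul_finRotate_mul_revPerm_inv p)
    have hCcard : Nat.card C = p := by
      rw [Nat.card_zpowers, (isCycle_finRotate_of_le hp.out.two_le).orderOf,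
        support_finRotate_of_le hp.out.two_le, Finset.card_univ, Fintype.card_fin]
    let e := finProdFinEquiv.trans (finCongr (pow_succ p n).symm)
    let W := (Perm.wreath S.toSubgroup C).map e.permCongrHom.toMonoidHom
    have hW : Nat.card W = p ^ (Nat.card (Perm (Fin (p ^ (n + 1))))).factorization p := by
      rw [Subgroup.card_map_of_injective e.permCongrHom.injective, Perm.card_wreath,
        S.card_eq_multiplicity, hCcard, Nat.card_perm, Nat.card_perm, Nat.card_fin, Nat.card_fin,
        pow_succ', Nat.factorization_factorial_mul hp.out, pow_add]
    refine ⟨Sylow.ofCard W hW, ?_⟩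
    rw [← permCongr_prodCongr_revPerm]
    exact conj_mem_map_permCongrHom e fun g hg => Perm.prodCongr_conj_mem_wreath hS hC hg

theorem stmt7_general (ℓ i : ℕ) (hℓ : ℓ.Prime) :
    ∃ S : Sylow ℓ (Equiv.Perm (Fin (ℓ ^ i))),
      ∀ g ∈ S, Fin.revPerm * g * Fin.revPerm⁻¹ ∈ S :=
  have := Fact.mk hℓ
  exists_sylow_revPerm_conj_mem ℓ i

/-- Let `ℓ` be an odd prime, `i ≥ 1`, and `n := ℓ^i`. Let `ρ` be the reversal
permutation of `Fin n` (sending `k` to `n - 1 - k`). Then there is a Sylow `ℓ`-subgroup of the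
symmetric group `Equiv.Perm (Fin n)` stable under conjugation by `ρ`. -/
theorem stmt7 (ℓ i : ℕ) (hℓ : ℓ.Prime) (hodd : Odd ℓ) (hi : 1 ≤ i) :
    ∃ S : Sylow ℓ (Equiv.Perm (Fin (ℓ ^ i))),
      ∀ g ∈ S, Fin.revPerm * g * Fin.revPerm⁻¹ ∈ S :=
  stmt7_general ℓ i hℓ
end

section
/- Let m ≥ 1 be odd, let ℓ be an odd prime dividing m, set ν := ν_ℓ(m) and d := ℓ^ν, and let R be the subgroup of DihedralGroup m generated by the rotation r (m/d) and the reflection sr 0 (a dihedral subgroup of order 2d). Then R is self-normalizing: the normalizer of R in DihedralGroup m equals R. -/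
/-!
For an additive subgroup `A` of `ZMod n`, the rotations and reflections indexed by `A` form a
dihedral subgroup, and `⟨r a, sr 0⟩` is the one indexed by the multiples of `a`. Conjugating
`sr 0` by `r b` or by `sr b` gives `sr (-2b)` or `sr (2b)`, so a normalizing element has index
`b` with `2b ∈ A`; for odd `n` halving is multiplication by a natural number, so `b ∈ A`.
-/

lemma ZMod.mem_of_two_nsmul_mem {n : ℕ} (hn : Odd n) {A : AddSubgroup (ZMod n)}
    {b : ZMod n} (h : 2 • b ∈ A) : b ∈ A := by
  obtain ⟨k, rfl⟩ := hn
  -- `(k + 1) • 2 • b = (2k + 2) • b = b` since `(2k + 1) • b = 0`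
  have hb : (k + 1) • 2 • b = b := by
    have hn0 := ZMod.natCast_self (2 * k + 1)
    rw [smul_smul, nsmul_eq_mul]
    push_cast at hn0 ⊢
    linear_combination b * hn0
  exact hb ▸ A.nsmul_mem h (k + 1)

namespace DihedralGroup

variable {n : ℕ}

def toZMod : DihedralGroup n → ZMod n
  | r i => i
  | sr i => i

@[simp] lemma toZMod_r (i : ZMod n) : toZMod (r i) = i := rfl

@[simp] lemma toZMod_sr (i : ZMod n) : toZMod (sr i) = i := rfl

def ofAddSubgroup (A : AddSubgroup (ZMod n)) : Subgroup (DihedralGroup n) where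
  carrier := {g | toZMod g ∈ A}
  one_mem' := A.zero_mem
  mul_mem' := by
    rintro (i | i) (j | j) hi hj <;>
      simp only [Set.mem_ofPred_eq, r_mul_r, r_mul_sr, sr_mul_r, sr_mul_sr, toZMod_r,
        toZMod_sr] at hi hj ⊢
    exacts [A.add_mem hi hj, A.sub_mem hj hi, A.add_mem hi hj, A.sub_mem hj hi]
  inv_mem' := by
    rintro (i | i) hi
    · exact A.neg_mem hi
    · exact hi

variable {A : AddSubgroup (ZMod n)}

@[simp] lemma sr_mem_ofAddSubgroup {i : ZMod n} : sr i ∈ ofAddSubgroup A ↔ i ∈ A := Iff.rfl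

lemma closure_r_sr_zero (a : ZMod n) :
    Subgroup.closure {r a, sr 0} = ofAddSubgroup (AddSubgroup.zmultiples a) := by
  apply le_antisymm
  · rw [Subgroup.closure_le, Set.insert_subset_iff, Set.singleton_subset_iff]
    exact ⟨AddSubgroup.mem_zmultiples a, zero_mem (AddSubgroup.zmultiples a)⟩
  · have hr : ∀ k : ℤ, r (k • a) ∈ Subgroup.closure {r a, sr 0} := fun k => by
      rw [zsmul_eq_mul, mul_comm, ← r_zpow]
      exact zpow_mem (Subgroup.subset_closure (by simp)) k
    rintro (i | i) hi <;> obtain ⟨k, rfl⟩ := AddSubgroup.mem_zmultiples_iff.mp hi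
    · exact hr k
    · rw [← zero_add (k • a), ← sr_mul_r]
      exact mul_mem (Subgroup.subset_closure (by simp)) (hr k)

lemma normalizer_ofAddSubgroup (hn : Odd n) (A : AddSubgroup (ZMod n)) :
    Subgroup.normalizer (ofAddSubgroup A) = ofAddSubgroup A := by
  refine le_antisymm (fun g hg => ?_) Subgroup.le_normalizer
  have hconj := (Subgroup.mem_normalizer_iff.mp hg (sr 0)).mp A.zero_mem
  apply ZMod.mem_of_two_nsmul_mem hn
  rcases g with b | b
  · have : r b * sr 0 * (r b)⁻¹ = sr (-(2 • b)) := by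
      rw [inv_r, r_mul_sr, sr_mul_r, two_nsmul]; ring_nf
    rwa [this, sr_mem_ofAddSubgroup, A.neg_mem_iff] at hconj
  · have : sr b * sr 0 * (sr b)⁻¹ = sr (2 • b) := by
      rw [inv_sr, sr_mul_sr, r_mul_sr, two_nsmul]; ring_nf
    rwa [this, sr_mem_ofAddSubgroup] at hconj

end DihedralGroup

theorem stmt9_general (m ℓ : ℕ) (hmodd : Odd m) :
    Subgroup.normalizer (Subgroup.closure
        {DihedralGroup.r ((m / ℓ ^ padicValNat ℓ m : ℕ) : ZMod m), DihedralGroup.sr 0}) =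
      Subgroup.closure
        {DihedralGroup.r ((m / ℓ ^ padicValNat ℓ m : ℕ) : ZMod m), DihedralGroup.sr 0} := by
  rw [DihedralGroup.closure_r_sr_zero, DihedralGroup.normalizer_ofAddSubgroup hmodd]

/-- Let `m ≥ 1` be odd, `ℓ` an odd prime dividing `m`, `ν := ν_ℓ(m)`,
`d := ℓ^ν`, and let `R` be the subgroup of `DihedralGroup m` generated by the rotation
`r (m/d)` and the reflection `sr 0` (a dihedral subgroup of order `2d`). Then `R` is
self-normalizing. -/
theorem stmt9 (m ℓ : ℕ) (hm : 1 ≤ m) (hmodd : Odd m) (hℓ : ℓ.Prime) (hℓodd : Odd ℓ)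
    (hdvd : ℓ ∣ m) :
    Subgroup.normalizer (Subgroup.closure
        {DihedralGroup.r ((m / ℓ ^ padicValNat ℓ m : ℕ) : ZMod m), DihedralGroup.sr 0}) =
      Subgroup.closure
        {DihedralGroup.r ((m / ℓ ^ padicValNat ℓ m : ℕ) : ZMod m), DihedralGroup.sr 0} :=
  stmt9_general m ℓ hmodd
end

section
/- Let m ≥ 2 be even, let ℓ be an odd prime dividing m, set ν := ν_ℓ(m) and d := ℓ^ν, and let R be the subgroup of DihedralGroup m generated by the rotation r (m/d) and the reflection sr 0 (a dihedral subgroup of order 2d). Then the normalizer of R in DihedralGroup m is the subgroup generated by R together with the order-two rotation r (m/2), and it has order 4d = 2·|R|. -/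
/-!
Write `m = 2 s d`, so that `R` is the dihedral subgroup `{r j, sr j | j ∈ ⟨2s⟩}` of
`DihedralGroup m`. Conjugating `sr i` by `r j` or by `sr j` gives `sr (i - 2j)` or `sr (2j - i)`,
so the normalizer of the dihedral subgroup over `M ≤ ZMod m` is the dihedral subgroup over
`{j | 2j ∈ M}`, here over `⟨s⟩`, which has twice the order. Since `d` is odd, `2s` and
`m / 2 = d s` generate `⟨s⟩`, so adjoining `r (m / 2)` to `R` gives the same subgroup.
-/

namespace DihedralGroup

open AddSubgroup

variable {n : ℕ}

def dihedralSubgroup (M : AddSubgroup (ZMod n)) : Subgroup (DihedralGroup n) where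
  carrier := {x | match x with | r j => j ∈ M | sr j => j ∈ M}
  one_mem' := M.zero_mem
  mul_mem' := by
    rintro (a | a) (b | b) ha hb
    · exact M.add_mem ha hb
    · exact M.sub_mem hb ha
    · exact M.add_mem ha hb
    · exact M.sub_mem hb ha
  inv_mem' := by
    rintro (a | a) h
    · exact M.neg_mem h
    · exact h

@[simp]
theorem r_mem_dihedralSubgroup {M : AddSubgroup (ZMod n)} {j : ZMod n} :
    r j ∈ dihedralSubgroup M ↔ j ∈ M :=
  Iff.rfl

@[simp]
theorem sr_mem_dihedralSubgroup {M : AddSubgroup (ZMod n)} {j : ZMod n} :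
    sr j ∈ dihedralSubgroup M ↔ j ∈ M :=
  Iff.rfl

theorem dihedralSubgroup_mono {M M' : AddSubgroup (ZMod n)} (h : M ≤ M') :
    dihedralSubgroup M ≤ dihedralSubgroup M' := by
  rintro (j | j) hj <;> exact h hj

theorem dihedralSubgroup_zmultiples (a : ZMod n) :
    dihedralSubgroup (zmultiples a) = Subgroup.closure {r a, sr 0} := by
  apply le_antisymm
  · have ha : r a ∈ Subgroup.closure {r a, sr 0} := Subgroup.subset_closure (by simp)
    have h0 : sr 0 ∈ Subgroup.closure {r a, sr 0} := Subgroup.subset_closure (by simp)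
    rintro (j | j) ⟨k, rfl⟩
    · simpa [mul_comm] using zpow_mem ha k
    · simpa [mul_comm] using mul_mem h0 (zpow_mem ha k)
  · rw [Subgroup.closure_le, Set.insert_subset_iff, Set.singleton_subset_iff]
    exact ⟨mem_zmultiples a, (zmultiples a).zero_mem⟩

theorem dihedralSubgroup_sup_zpowers_r (M : AddSubgroup (ZMod n)) (a : ZMod n) :
    dihedralSubgroup M ⊔ Subgroup.zpowers (r a) = dihedralSubgroup (M ⊔ zmultiples a) := by
  apply le_antisymm
  · refine sup_le (dihedralSubgroup_mono le_sup_left) ?_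
    rw [Subgroup.zpowers_le, r_mem_dihedralSubgroup]
    exact mem_sup_right (mem_zmultiples a)
  · have hpow (k : ℤ) : r a ^ k ∈ dihedralSubgroup M ⊔ Subgroup.zpowers (r a) :=
      Subgroup.mem_sup_right (Subgroup.zpow_mem_zpowers _ k)
    rintro (j | j) hj <;> obtain ⟨u, hu, _, ⟨k, rfl⟩, rfl⟩ := mem_sup.mp hj
    · have hu' : r u ∈ dihedralSubgroup M ⊔ Subgroup.zpowers (r a) := Subgroup.mem_sup_left hu
      simpa [mul_comm] using mul_mem hu' (hpow k)
    · have hu' : sr u ∈ dihedralSubgroup M ⊔ Subgroup.zpowers (r a) := Subgroup.mem_sup_left hu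
      simpa [mul_comm] using mul_mem hu' (hpow k)

theorem normalizer_dihedralSubgroup (M : AddSubgroup (ZMod n)) :
    Subgroup.normalizer (dihedralSubgroup M : Set (DihedralGroup n)) =
      dihedralSubgroup (M.comap (AddMonoidHom.mulLeft 2)) := by
  ext x
  rw [Subgroup.mem_normalizer_iff]
  cases x with
  | r j =>
    refine ⟨fun h => ?_, fun (h2 : 2 * j ∈ M) g => ?_⟩
    · simpa [two_mul] using M.neg_mem ((h (sr 0)).mp M.zero_mem)
    · cases g with
      | r i => simp
      | sr i =>
        rw [show r j * sr i * (r j)⁻¹ = sr (i + -(2 * j)) by simp; ring,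
          sr_mem_dihedralSubgroup, sr_mem_dihedralSubgroup, add_mem_cancel_right (neg_mem h2)]
  | sr j =>
    refine ⟨fun h => ?_, fun (h2 : 2 * j ∈ M) g => ?_⟩
    · simpa [two_mul] using (h (sr 0)).mp M.zero_mem
    · cases g with
      | r i => simp
      | sr i =>
        rw [show sr j * sr i * (sr j)⁻¹ = sr (2 * j + -i) by simp; ring,
          sr_mem_dihedralSubgroup, sr_mem_dihedralSubgroup, add_mem_cancel_left h2, neg_mem_iff]

def dihedralSubgroupEquivSum (M : AddSubgroup (ZMod n)) : dihedralSubgroup M ≃ M ⊕ M where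
  toFun
    | ⟨r j, h⟩ => .inl ⟨j, h⟩
    | ⟨sr j, h⟩ => .inr ⟨j, h⟩
  invFun
    | .inl ⟨j, h⟩ => ⟨r j, h⟩
    | .inr ⟨j, h⟩ => ⟨sr j, h⟩
  left_inv := by rintro ⟨(j | j), h⟩ <;> rfl
  right_inv := by rintro (⟨j, h⟩ | ⟨j, h⟩) <;> rfl

theorem card_dihedralSubgroup [NeZero n] (M : AddSubgroup (ZMod n)) :
    Nat.card (dihedralSubgroup M) = 2 * Nat.card M := by
  rw [Nat.card_congr (dihedralSubgroupEquivSum M), Nat.card_sum, two_mul]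

end DihedralGroup

theorem AddSubgroup.zmultiples_nsmul_sup_zmultiples_nsmul_of_coprime {G : Type*} [AddGroup G]
    {a b : ℕ} (hab : a.Coprime b) (x : G) :
    zmultiples (a • x) ⊔ zmultiples (b • x) = zmultiples x := by
  have bezout : (a.gcdA b) • (a • x) + (a.gcdB b) • (b • x) = x := by
    rw [← natCast_zsmul, ← natCast_zsmul, ← mul_zsmul, ← mul_zsmul, ← add_zsmul, mul_comm,
      mul_comm (a.gcdB b), ← Nat.gcd_eq_gcd_ab, hab.gcd_eq_one, Nat.cast_one, one_zsmul]
  refine le_antisymm (sup_le (zmultiples_le_of_mem (nsmul_mem_zmultiples x a))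
    (zmultiples_le_of_mem (nsmul_mem_zmultiples x b))) (zmultiples_le_of_mem ?_)
  have h := add_mem (zsmul_mem (mem_sup_left (mem_zmultiples (a • x))) (a.gcdA b))
    (zsmul_mem (mem_sup_right (mem_zmultiples (b • x))) (a.gcdB b))
  rwa [bezout] at h

namespace ZMod

open AddSubgroup

theorem natCast_mem_zmultiples_natCast_iff {m c x : ℕ} (hc : c ∣ m) :
    (x : ZMod m) ∈ zmultiples (c : ZMod m) ↔ c ∣ x := by
  refine ⟨fun ⟨k, hk⟩ => ?_, fun ⟨t, ht⟩ => ⟨t, by simp [ht, mul_comm]⟩⟩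
  have := congrArg (castHom hc (ZMod c)) hk
  rw [map_zsmul, map_natCast, map_natCast, natCast_self, smul_zero, eq_comm,
    natCast_eq_zero_iff] at this
  exact this

theorem comap_mulLeft_zmultiples_natCast {m c s : ℕ} [NeZero m] (hc : c ≠ 0)
    (hcs : c * s ∣ m) :
    (zmultiples ((c * s : ℕ) : ZMod m)).comap (AddMonoidHom.mulLeft (c : ZMod m)) =
      zmultiples (s : ZMod m) := by
  ext j
  rw [mem_comap, AddMonoidHom.coe_mulLeft, ← natCast_zmod_val j, ← Nat.cast_mul,
    natCast_mem_zmultiples_natCast_iff hcs,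
    natCast_mem_zmultiples_natCast_iff (dvd_of_mul_left_dvd hcs),
    Nat.mul_dvd_mul_iff_left (Nat.pos_of_ne_zero hc)]

theorem card_zmultiples_natCast {m c : ℕ} [NeZero m] (hc : c ∣ m) :
    Nat.card (zmultiples (c : ZMod m)) = m / c := by
  rw [Nat.card_zmultiples, addOrderOf_coe c (NeZero.ne m), Nat.gcd_eq_right hc]

end ZMod

theorem Nat.exists_eq_two_mul_mul_of_even_of_odd {m d : ℕ} (hm : Even m) (hd : Odd d)
    (hdm : d ∣ m) :
    ∃ s, m = 2 * s * d := by
  obtain ⟨k, rfl⟩ := hdm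
  obtain ⟨s, rfl⟩ := (Nat.even_mul.mp hm).resolve_left (Nat.not_even_iff_odd.mpr hd)
  exact ⟨s, by ring⟩

open DihedralGroup AddSubgroup ZMod in
theorem stmt10_general (m ℓ : ℕ) (hm : 2 ≤ m) (hmeven : Even m) (hℓodd : Odd ℓ)
    (R : Subgroup (DihedralGroup m))
    (hR : R = Subgroup.closure
        {DihedralGroup.r ((m / ℓ ^ padicValNat ℓ m : ℕ) : ZMod m), DihedralGroup.sr 0}) :
    (Subgroup.normalizer (R : Set (DihedralGroup m))) = R ⊔ Subgroup.zpowers (DihedralGroup.r ((m / 2 : ℕ) : ZMod m)) ∧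
      Nat.card (Subgroup.normalizer (R : Set (DihedralGroup m))) = 4 * ℓ ^ padicValNat ℓ m ∧
      Nat.card (Subgroup.normalizer (R : Set (DihedralGroup m))) = 2 * Nat.card R := by
  have : NeZero m := ⟨by omega⟩
  set d := ℓ ^ padicValNat ℓ m
  have hd : Odd d := hℓodd.pow
  obtain ⟨s, hs⟩ := Nat.exists_eq_two_mul_mul_of_even_of_odd hmeven hd pow_padicValNat_dvd
  have hs0 : s ≠ 0 := by rintro rfl; omega
  have hR' : R = dihedralSubgroup (zmultiples ((2 * s : ℕ) : ZMod m)) := by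
    rw [hR, dihedralSubgroup_zmultiples, hs, Nat.mul_div_cancel _ hd.pos]
  have hN : Subgroup.normalizer (R : Set (DihedralGroup m)) =
      dihedralSubgroup (zmultiples (s : ZMod m)) := by
    rw [hR', normalizer_dihedralSubgroup, ← Nat.cast_ofNat (R := ZMod m) (n := 2),
      comap_mulLeft_zmultiples_natCast two_ne_zero (hs ▸ dvd_mul_right _ _)]
  have hcardN : Nat.card (Subgroup.normalizer (R : Set (DihedralGroup m))) = 4 * d := by
    rw [hN, card_dihedralSubgroup, card_zmultiples_natCast (hs ▸ ⟨2 * d, by ring⟩), hs,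
      show 2 * s * d = s * (2 * d) by ring, Nat.mul_div_cancel_left _ (Nat.pos_of_ne_zero hs0)]
    ring
  have hcardR : Nat.card R = 2 * d := by
    rw [hR', card_dihedralSubgroup, card_zmultiples_natCast (hs ▸ dvd_mul_right _ _), hs,
      Nat.mul_div_cancel_left _ (by omega)]
  have hhalf : m / 2 = d * s := by
    rw [hs, mul_assoc, Nat.mul_div_cancel_left _ two_pos, mul_comm]
  refine ⟨?_, hcardN, by rw [hcardN, hcardR]; ring⟩
  rw [hN, hR', dihedralSubgroup_sup_zpowers_r, hhalf, Nat.cast_mul, Nat.cast_mul,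
    ← nsmul_eq_mul, ← nsmul_eq_mul,
    zmultiples_nsmul_sup_zmultiples_nsmul_of_coprime (Nat.coprime_two_left.mpr hd)]

/-- Let `m ≥ 2` be even, `ℓ` an odd prime dividing `m`, `ν := ν_ℓ(m)`,
`d := ℓ^ν`, and let `R ≤ DihedralGroup m` be generated by the rotation `r (m/d)` and the
reflection `sr 0` (a dihedral subgroup of order `2d`). Then the normalizer of `R` is generated
by `R` together with the order-two rotation `r (m/2)`, and has order `4d = 2·|R|`. -/
theorem stmt10 (m ℓ : ℕ) (hm : 2 ≤ m) (hmeven : Even m) (hℓ : ℓ.Prime) (hℓodd : Odd ℓ)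
    (hdvd : ℓ ∣ m)
    (R : Subgroup (DihedralGroup m))
    (hR : R = Subgroup.closure
        {DihedralGroup.r ((m / ℓ ^ padicValNat ℓ m : ℕ) : ZMod m), DihedralGroup.sr 0}) :
    (Subgroup.normalizer (R : Set (DihedralGroup m))) = R ⊔ Subgroup.zpowers (DihedralGroup.r ((m / 2 : ℕ) : ZMod m)) ∧
      Nat.card (Subgroup.normalizer (R : Set (DihedralGroup m))) = 4 * ℓ ^ padicValNat ℓ m ∧
      Nat.card (Subgroup.normalizer (R : Set (DihedralGroup m))) = 2 * Nat.card R :=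
  stmt10_general m ℓ hm hmeven hℓodd R hR
end
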